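/- Let K = Z_N and L ⊆ Z_N. The Gabor system G(g, L × Z_N) is a frame for ℂ^N if and only if Σ_{ℓ∈L} |ĝ[j−ℓ]|² > 0 for every j ∈ Z_N, where ĝ = F_N g is the discrete Fourier transform of g; moreover its frame operator is unitarily similar via F_N to the diagonal matrix with entries N·Σ_{ℓ∈L} |ĝ[j−ℓ]|². -/

import Mathlib

open Finset Matrix

noncomputable def zeta (N : ℕ) : ℂ := Complex.exp (2 * Real.pi * Complex.I / N)

/-- The DFT `(F_N x)[k] = (1/√N) ∑_j x[j] ζ_N^{−kj}`. -/
noncomputable def dft (N : ℕ) [NeZero N] (x : ZMod N → ℂ) : ZMod N → ℂ :=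
  fun k => (1 / Real.sqrt N : ℂ) *
    ∑ j : ZMod N, x j * zeta N ^ (-((k.val * j.val : ℕ) : ℤ))

/-!
The frame operator of `G(g, L × Z_N)` is `A Aᴴ`, where the columns of `A` are the vectors
`M_ℓ T_k g`. With `e = ZMod.stdAddChar`, the DFT turns `M_ℓ T_k g` into
`j ↦ e(-(j - ℓ) k) ĝ(j - ℓ)`, so summing over `k` and using orthogonality of the characters
`k ↦ e(-(j - ℓ) k)` shows that `(F A) (F A)ᴴ` is diagonal with entries `N ∑_ℓ |ĝ(j - ℓ)|²`.
The system spans `ℂ^N` iff `A` has full rank; as `F` is unitary and `rank (B Bᴴ) = rank B`,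
this happens iff that diagonal has no zero entry.
-/

open scoped ZMod ComplexOrder
open ZMod (stdAddChar)

namespace Matrix

lemma span_cols_eq_top_iff_rank_eq {K m n : Type*} [Field K] [Fintype m] [Fintype n]
    (A : Matrix m n K) : Submodule.span K (Set.range A.col) = ⊤ ↔ A.rank = Fintype.card m := by
  rw [rank_eq_finrank_span_cols, Submodule.eq_top_iff_finrank_eq,
    Module.finrank_fintype_fun_eq_card]

lemma rank_diagonal_eq_card_iff {K m : Type*} [Field K] [Fintype m] [DecidableEq m]
    (w : m → K) : (diagonal w).rank = Fintype.card m ↔ ∀ i, w i ≠ 0 := by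
  classical
  rw [rank_diagonal, Fintype.card_subtype, ← Finset.card_univ, Finset.card_filter_eq_iff]
  simp

end Matrix

namespace ZMod

variable {N : ℕ} [NeZero N]

lemma star_stdAddChar (x : ZMod N) : star (stdAddChar x) = stdAddChar (-x) := by
  rw [stdAddChar_apply, stdAddChar_apply, AddChar.map_neg_eq_inv, Circle.coe_inv_eq_conj]
  rfl

lemma sum_stdAddChar_mul_star (a b : ZMod N) :
    ∑ k, stdAddChar (-(a * k)) * star (stdAddChar (-(b * k))) = if a = b then (N : ℂ) else 0 := by
  have h (k : ZMod N) :
      stdAddChar (-(a * k)) * star (stdAddChar (-(b * k))) = stdAddChar (k * (b - a)) := by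
    rw [star_stdAddChar, ← AddChar.map_add_eq_mul]
    ring_nf
  simp only [h, AddChar.sum_mulShift _ (isPrimitive_stdAddChar N), sub_eq_zero, eq_comm, card]
  push_cast
  rfl

lemma dft_modulate_translate (g : ZMod N → ℂ) (ℓ k m : ZMod N) :
    𝓕 (fun j => stdAddChar (ℓ * j) * g (j - k)) m =
      stdAddChar (-((m - ℓ) * k)) * 𝓕 g (m - ℓ) := by
  simp only [dft_apply, smul_eq_mul, Finset.mul_sum]
  refine Fintype.sum_equiv (Equiv.subRight k) _ _ fun t => ?_
  rw [Equiv.subRight_apply, ← mul_assoc, ← mul_assoc, ← AddChar.map_add_eq_mul,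
    ← AddChar.map_add_eq_mul]
  ring_nf

end ZMod

section Fourier

variable {N : ℕ} [NeZero N]

lemma zeta_zpow (j : ℤ) : zeta N ^ j = stdAddChar (j : ZMod N) := by
  rw [ZMod.stdAddChar_coe, zeta, ← Complex.exp_int_mul]
  ring_nf

lemma zeta_pow_val (x : ZMod N) : zeta N ^ x.val = stdAddChar x := by
  rw [← zpow_natCast, zeta_zpow, Int.cast_natCast, ZMod.natCast_zmod_val]

lemma zeta_zpow_neg_val_mul_val (a b : ZMod N) :
    zeta N ^ (-((a.val * b.val : ℕ) : ℤ)) = stdAddChar (-(a * b)) := by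
  rw [zeta_zpow]
  push_cast
  rw [ZMod.natCast_zmod_val, ZMod.natCast_zmod_val]

lemma dft_eq_smul_dft (x : ZMod N → ℂ) : dft N x = (1 / Real.sqrt N : ℂ) • 𝓕 x := by
  ext k
  simp only [dft, ZMod.dft_apply, Pi.smul_apply, smul_eq_mul, zeta_zpow_neg_val_mul_val,
    mul_comm (x _), mul_comm k]

noncomputable def fourierMatrix (N : ℕ) [NeZero N] : Matrix (ZMod N) (ZMod N) ℂ :=
  of fun a b => (1 / Real.sqrt N : ℂ) * stdAddChar (-(a * b))

lemma fourierMatrix_mulVec (x : ZMod N → ℂ) : fourierMatrix N *ᵥ x = dft N x := by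
  ext k
  simp only [mulVec, dotProduct, fourierMatrix, of_apply, dft_eq_smul_dft, Pi.smul_apply,
    ZMod.dft_apply, smul_eq_mul, Finset.mul_sum, mul_assoc, mul_comm k]

lemma fourierMatrix_mul_conjTranspose : fourierMatrix N * (fourierMatrix N)ᴴ = 1 := by
  have hsqrt : (Real.sqrt N : ℂ) ^ 2 = N := by
    rw [← Complex.ofReal_pow, Real.sq_sqrt (Nat.cast_nonneg N), Complex.ofReal_natCast]
  ext a b
  simp only [mul_apply, conjTranspose_apply, fourierMatrix, of_apply, star_mul', one_apply]
  have h (j : ZMod N) : (1 / Real.sqrt N : ℂ) * stdAddChar (-(a * j)) *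
      (star (1 / Real.sqrt N : ℂ) * star (stdAddChar (-(b * j)))) =
      (N : ℂ)⁻¹ * (stdAddChar (-(a * j)) * star (stdAddChar (-(b * j)))) := by
    rw [show star (1 / Real.sqrt N : ℂ) = 1 / Real.sqrt N by simp, ← hsqrt]
    ring
  rw [Finset.sum_congr rfl fun j _ => h j, ← Finset.mul_sum, ZMod.sum_stdAddChar_mul_star]
  split_ifs <;> simp [NeZero.ne]

lemma isUnit_det_fourierMatrix : IsUnit (fourierMatrix N).det :=
  isUnit_det_of_right_inverse fourierMatrix_mul_conjTranspose

/-- The synthesis matrix of `G(g, L × Z_N)`: its column `(ℓ, k)` is `M_ℓ T_k g`. -/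
noncomputable def gaborMatrix (g : ZMod N → ℂ) (L : Finset (ZMod N)) :
    Matrix (ZMod N) (L × ZMod N) ℂ :=
  of fun j p => stdAddChar (p.1 * j : ZMod N) * g (j - p.2)

variable (g : ZMod N → ℂ) (L : Finset (ZMod N))

lemma range_col_gaborMatrix :
    Set.range (gaborMatrix g L).col =
      {v | ∃ ℓ ∈ L, ∃ k : ZMod N, v = fun j => zeta N ^ ((ℓ * j).val) * g (j - k)} := by
  ext v
  simp only [Set.mem_range, Set.mem_ofPred_eq, Prod.exists, Subtype.exists, exists_prop,
    col_apply', gaborMatrix, of_apply, zeta_pow_val, eq_comm (a := v)]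

lemma gaborMatrix_mul_conjTranspose :
    gaborMatrix g L * (gaborMatrix g L)ᴴ =
      of fun i j => ∑ k : ZMod N, ∑ ℓ ∈ L,
        (zeta N ^ ((ℓ * i).val) * g (i - k)) *
          (starRingEnd ℂ) (zeta N ^ ((ℓ * j).val) * g (j - k)) := by
  ext i j
  simp only [mul_apply, conjTranspose_apply, gaborMatrix, of_apply, Fintype.sum_prod_type,
    zeta_pow_val, starRingEnd_apply]
  rw [Finset.sum_comm]
  exact Finset.sum_congr rfl fun k _ => Finset.sum_coe_sort L
    fun ℓ => stdAddChar (ℓ * i) * g (i - k) * star (stdAddChar (ℓ * j) * g (j - k))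

lemma fourierMatrix_mul_gaborMatrix :
    fourierMatrix N * gaborMatrix g L =
      of fun j (p : L × ZMod N) =>
        stdAddChar (-((j - p.1 : ZMod N) * p.2)) * dft N g (j - p.1) := by
  ext j p
  change (fourierMatrix N *ᵥ fun i => stdAddChar (p.1 * i : ZMod N) * g (i - p.2)) j = _
  simp only [fourierMatrix_mulVec, of_apply, dft_eq_smul_dft, Pi.smul_apply,
    ZMod.dft_modulate_translate, smul_eq_mul]
  ring

lemma gram_fourierMatrix_mul_gaborMatrix :
    fourierMatrix N * gaborMatrix g L * (fourierMatrix N * gaborMatrix g L)ᴴ =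
      diagonal fun j => (N : ℂ) * ∑ ℓ ∈ L, ((‖dft N g (j - ℓ)‖ : ℝ) : ℂ) ^ 2 := by
  ext a b
  simp only [fourierMatrix_mul_gaborMatrix, mul_apply, conjTranspose_apply, of_apply,
    Fintype.sum_prod_type, star_mul', diagonal_apply]
  have h (ℓ : ZMod N) : ∑ k, stdAddChar (-((a - ℓ) * k)) * dft N g (a - ℓ) *
      (star (stdAddChar (-((b - ℓ) * k))) * star (dft N g (b - ℓ))) =
      dft N g (a - ℓ) * star (dft N g (b - ℓ)) *
        ∑ k, stdAddChar (-((a - ℓ) * k)) * star (stdAddChar (-((b - ℓ) * k))) := by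
    rw [Finset.mul_sum]
    exact Finset.sum_congr rfl fun k _ => by ring
  simp only [h, ZMod.sum_stdAddChar_mul_star, sub_left_inj]
  split_ifs with hab
  · subst hab
    simp only [RCLike.star_def, Complex.mul_conj', Finset.mul_sum, mul_comm]
    exact Finset.sum_coe_sort L fun ℓ => (N : ℂ) * ((‖dft N g (a - ℓ)‖ : ℝ) : ℂ) ^ 2
  · simp

lemma span_cols_gaborMatrix_eq_top_iff :
    Submodule.span ℂ (Set.range (gaborMatrix g L).col) = ⊤ ↔
      ∀ j, 0 < ∑ ℓ ∈ L, ‖dft N g (j - ℓ)‖ ^ 2 := by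
  rw [span_cols_eq_top_iff_rank_eq, ← rank_mul_eq_right_of_isUnit_det _ _ isUnit_det_fourierMatrix,
    ← rank_self_mul_conjTranspose, gram_fourierMatrix_mul_gaborMatrix, rank_diagonal_eq_card_iff]
  refine forall_congr' fun j => ?_
  rw [Ne, mul_eq_zero, not_or, and_iff_right (Nat.cast_ne_zero.mpr (NeZero.ne N))]
  norm_cast
  exact (Finset.sum_nonneg fun ℓ _ => sq_nonneg _).lt_iff_ne'.symm

end Fourier

theorem stmt19_general (N : ℕ) [NeZero N] (g : ZMod N → ℂ)
    (L : Finset (ZMod N)) :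
    (Submodule.span ℂ
        {v : ZMod N → ℂ | ∃ ℓ ∈ L, ∃ k : ZMod N,
          v = fun j => zeta N ^ ((ℓ * j).val) * g (j - k)} = ⊤ ↔
      ∀ j : ZMod N, 0 < ∑ ℓ ∈ L, ‖dft N g (j - ℓ)‖ ^ 2) ∧
    (Matrix.of fun a b : ZMod N =>
          (1 / Real.sqrt N : ℂ) * zeta N ^ (-((a.val * b.val : ℕ) : ℤ))) *
        (Matrix.of fun i j : ZMod N =>
          ∑ k : ZMod N, ∑ ℓ ∈ L,
            (zeta N ^ ((ℓ * i).val) * g (i - k)) *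
              (starRingEnd ℂ) (zeta N ^ ((ℓ * j).val) * g (j - k))) *
        (Matrix.of fun a b : ZMod N =>
          (1 / Real.sqrt N : ℂ) * zeta N ^ (-((a.val * b.val : ℕ) : ℤ)))ᴴ =
      Matrix.diagonal (fun j : ZMod N =>
        (N : ℂ) * ∑ ℓ ∈ L, ((‖dft N g (j - ℓ)‖ : ℝ) : ℂ) ^ 2) := by
  have hF : (Matrix.of fun a b : ZMod N =>
      (1 / Real.sqrt N : ℂ) * zeta N ^ (-((a.val * b.val : ℕ) : ℤ))) = fourierMatrix N := by
    ext a b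
    rw [of_apply, zeta_zpow_neg_val_mul_val]
    rfl
  rw [← range_col_gaborMatrix, span_cols_gaborMatrix_eq_top_iff, hF,
    ← gaborMatrix_mul_conjTranspose, ← gram_fourierMatrix_mul_gaborMatrix, conjTranspose_mul]
  simp only [Matrix.mul_assoc, and_self]

/-- Full set of translations: `G(g, L × Z_N)` is a frame for `ℂ^N` iff
`∑_{ℓ∈L} |ĝ[j−ℓ]|² > 0` for every `j`; moreover its frame operator matrix is
unitarily similar via the DFT matrix to the diagonal matrix with entries
`N·∑_{ℓ∈L} |ĝ[j−ℓ]|²`. -/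
theorem stmt19 (N : ℕ) (hN : 1 < N) [NeZero N] (g : ZMod N → ℂ)
    (L : Finset (ZMod N)) (hL : L.Nonempty) :
    (Submodule.span ℂ
        {v : ZMod N → ℂ | ∃ ℓ ∈ L, ∃ k : ZMod N,
          v = fun j => zeta N ^ ((ℓ * j).val) * g (j - k)} = ⊤ ↔
      ∀ j : ZMod N, 0 < ∑ ℓ ∈ L, ‖dft N g (j - ℓ)‖ ^ 2) ∧
    (Matrix.of fun a b : ZMod N =>
          (1 / Real.sqrt N : ℂ) * zeta N ^ (-((a.val * b.val : ℕ) : ℤ))) *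
        (Matrix.of fun i j : ZMod N =>
          ∑ k : ZMod N, ∑ ℓ ∈ L,
            (zeta N ^ ((ℓ * i).val) * g (i - k)) *
              (starRingEnd ℂ) (zeta N ^ ((ℓ * j).val) * g (j - k))) *
        (Matrix.of fun a b : ZMod N =>
          (1 / Real.sqrt N : ℂ) * zeta N ^ (-((a.val * b.val : ℕ) : ℤ)))ᴴ =
      Matrix.diagonal (fun j : ZMod N =>
        (N : ℂ) * ∑ ℓ ∈ L, ((‖dft N g (j - ℓ)‖ : ℝ) : ℂ) ^ 2) :=
  stmt19_general N g L
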